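/- Let a > 0, U > 0, and ℓ_1, ..., ℓ_n ≥ 0. Define K* as the unique solution of Σ_i a/(K* - ℓ_i) = U with K* > max_i ℓ_i, and set σ_i² = a/(K* - ℓ_i). Then this allocation satisfies Σ_i σ_i² = U and a/σ_i² + ℓ_i = K* for every i; moreover, for any other allocation (τ_1², ..., τ_n²) with τ_i² > 0 and Σ_i τ_i² ≤ U, we have max_i (a/τ_i² + ℓ_i) ≥ K*. -/

import Mathlib

/-- the balanced allocation `σᵢ² = a/(K* - ℓᵢ)` exhausts the budget,
equilibrates the per-client bound at `K*`, and any other feasible allocation has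
worst-case objective at least `K*`. -/
theorem stmt_1 (n : ℕ) (a U : ℝ) (ha : 0 < a) (hU : 0 < U)
    (ℓ : Fin n → ℝ) (hℓ : ∀ i, 0 ≤ ℓ i)
    (M : ℝ) (hM : IsGreatest (Set.range ℓ) M)
    (Kstar : ℝ) (hK : M < Kstar) (hbudget : ∑ i, a / (Kstar - ℓ i) = U)
    (σ2 : Fin n → ℝ) (hσ : ∀ i, σ2 i = a / (Kstar - ℓ i)) :
    (∑ i, σ2 i = U) ∧ (∀ i, a / σ2 i + ℓ i = Kstar) ∧
    ∀ τ2 : Fin n → ℝ, (∀ i, 0 < τ2 i) → (∑ i, τ2 i ≤ U) →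
      ∃ i, Kstar ≤ a / τ2 i + ℓ i := by
  have hpos : ∀ i, 0 < Kstar - ℓ i := by
    intro i
    have : ℓ i ≤ M := hM.2 ⟨i, rfl⟩
    linarith
  refine ⟨by simp_rw [hσ]; exact hbudget, ?_, ?_⟩
  · intro i
    have h1 := (hpos i).ne'
    rw [hσ]
    field_simp
    ring
  · intro τ2 hτ hsum
    by_contra h
    push_neg at h
    have hne : Nonempty (Fin n) := by
      exact Set.range_nonempty_iff_nonempty.mp ⟨M, hM.1⟩
    have key : ∀ i, a / (Kstar - ℓ i) < τ2 i := by
      intro i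
      have h1 := h i
      have h2 : a / τ2 i < Kstar - ℓ i := by linarith
      have := (div_lt_iff₀ (hτ i)).mp h2
      exact (div_lt_iff₀ (hpos i)).mpr (by linarith [mul_comm (τ2 i) (Kstar - ℓ i)])
    have := Finset.sum_lt_sum_of_nonempty Finset.univ_nonempty (fun i _ => key i)
    rw [hbudget] at this
    linarith
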